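/- arXiv:1610.04939 — 3 statements merged into one kernel-verified Lean document; each statement's English description precedes it below -/
import Mathlib

section
/- The TE symmetric-mode transcendental equation has at least one solution: for any h > 0 and 0 < k_cl < k_co with √(k_co² − k_cl²)·h < π/2, there exists k_z with k_cl < k_z < k_co such that √(k_z² − k_cl²) = √(k_co² − k_z²) · tan(√(k_co² − k_z²) · h). -/
/-- Existence of a symmetric TE bound mode: for `h > 0` and `0 < k_cl < k_co` with
`√(k_co² − k_cl²)·h < π/2`, there exists a propagation constant `k_z ∈ (k_cl, k_co)`
solving the transcendental dispersion relation
`√(k_z² − k_cl²) = √(k_co² − k_z²) · tan(√(k_co² − k_z²)·h)`. -/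
theorem symmetric_mode_exists (h kcl kco : ℝ) (hh : 0 < h)
    (h1 : 0 < kcl) (h2 : kcl < kco)
    (hV : Real.sqrt (kco ^ 2 - kcl ^ 2) * h < Real.pi / 2) :
    ∃ kz : ℝ, kcl < kz ∧ kz < kco ∧
      Real.sqrt (kz ^ 2 - kcl ^ 2) =
        Real.sqrt (kco ^ 2 - kz ^ 2) *
          Real.tan (Real.sqrt (kco ^ 2 - kz ^ 2) * h) := by
  set F : ℝ → ℝ := fun x => Real.sqrt (x ^ 2 - kcl ^ 2) -
      Real.sqrt (kco ^ 2 - x ^ 2) * Real.tan (Real.sqrt (kco ^ 2 - x ^ 2) * h) with hF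
  have hsq : kcl ^ 2 < kco ^ 2 := by nlinarith
  have hs0 : 0 < Real.sqrt (kco ^ 2 - kcl ^ 2) := Real.sqrt_pos.2 (by linarith)
  have hbound : ∀ x ∈ Set.Icc kcl kco,
      Real.sqrt (kco ^ 2 - x ^ 2) * h ∈ Set.Ico 0 (Real.pi / 2) := by
    intro x hx
    refine ⟨by positivity, ?_⟩
    have hx1 : kcl ≤ x := hx.1
    have hle : Real.sqrt (kco ^ 2 - x ^ 2) ≤ Real.sqrt (kco ^ 2 - kcl ^ 2) := by
      apply Real.sqrt_le_sqrt; nlinarith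
    calc Real.sqrt (kco ^ 2 - x ^ 2) * h ≤ Real.sqrt (kco ^ 2 - kcl ^ 2) * h :=
          mul_le_mul_of_nonneg_right hle hh.le
      _ < Real.pi / 2 := hV
  have hcont : ContinuousOn F (Set.Icc kcl kco) := by
    apply ContinuousOn.sub
    · exact (Real.continuous_sqrt.comp (by continuity)).continuousOn
    · apply ContinuousOn.mul
      · exact (Real.continuous_sqrt.comp (by continuity)).continuousOn
      · apply Real.continuousOn_tan.comp
        · exact ((Real.continuous_sqrt.comp (by continuity)).mul continuous_const).continuousOn
        · intro x hx
          have hb := hbound x hx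
          have hpi := Real.pi_pos
          exact ne_of_gt (Real.cos_pos_of_mem_Ioo ⟨by linarith [hb.1], hb.2⟩)
  have hFa : F kcl < 0 := by
    have ht : 0 < Real.tan (Real.sqrt (kco ^ 2 - kcl ^ 2) * h) :=
      Real.tan_pos_of_pos_of_lt_pi_div_two (by positivity) hV
    have h0 : Real.sqrt (kcl ^ 2 - kcl ^ 2) = 0 := by simp
    simp only [hF, h0]
    nlinarith [mul_pos hs0 ht]
  have hFb : 0 < F kco := by
    have h0 : Real.sqrt (kco ^ 2 - kco ^ 2) = 0 := by simp
    simp only [hF, h0]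
    simpa using hs0
  have hmem : (0 : ℝ) ∈ Set.Ioo (F kcl) (F kco) := ⟨hFa, hFb⟩
  obtain ⟨kz, hkz, hfz⟩ := intermediate_value_Ioo h2.le hcont hmem
  refine ⟨kz, hkz.1, hkz.2, ?_⟩
  have : Real.sqrt (kz ^ 2 - kcl ^ 2) -
      Real.sqrt (kco ^ 2 - kz ^ 2) * Real.tan (Real.sqrt (kco ^ 2 - kz ^ 2) * h) = 0 := hfz
  linarith
end

section
/- Combining the previous identity with the derivative bounds |w_A^{(k)}| ≤ M_k A^{−k}: if additionally |f^{(k)}(z)| ≤ C_k z^{−1/2−k} for all z ≥ 1 and k ≤ p, then |∫_{αA}^{A} w_A(z) f(z) e^{iaz} dz − ∫_{αA}^{A} f(z) e^{iaz} dz| together with tail estimates yields |∫₁^∞ f e^{iaz} dz − ∫₁^∞ w_A f e^{iaz} dz| = O(a^{−p} A^{−p+1/2}) as A → ∞. -/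
open Set Filter MeasureTheory intervalIntegral Topology

noncomputable section

namespace WinErr

/-- the oscillatory kernel -/
def e (a : ℝ) (z : ℝ) : ℂ := Complex.exp (Complex.I * (a * z))

lemma continuous_e (a : ℝ) : Continuous (e a) := by
  unfold e; fun_prop

lemma norm_e (a z : ℝ) : ‖e a z‖ = 1 := by
  simp [e, Complex.norm_exp]

lemma hasDerivAt_e (a z : ℝ) :
    HasDerivAt (e a) (Complex.I * a * e a z) z := by
  have h0 : HasDerivAt (fun z : ℝ => (z : ℂ)) 1 z := by
    simpa using (hasDerivAt_id z).ofReal_comp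
  have h1 : HasDerivAt (fun z : ℝ => (Complex.I * (a * z) : ℂ)) (Complex.I * a) z := by
    have := h0.const_mul (Complex.I * a)
    simpa [mul_assoc] using this
  have := h1.cexp
  unfold e
  convert this using 1
  ring

lemma ibp (a : ℝ) (c R : ℝ) (u u' : ℝ → ℂ)
    (hu : ∀ x ∈ uIcc c R, HasDerivAt u (u' x) x)
    (hu' : ContinuousOn u' (uIcc c R)) :
    ∫ z in c..R, u' z * e a z
      = u R * e a R - u c * e a c - (Complex.I * a) * ∫ z in c..R, u z * e a z := by
  have hv : ∀ x ∈ uIcc c R, HasDerivAt (e a) (Complex.I * a * e a x) x :=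
    fun x _ => hasDerivAt_e a x
  have hInt1 : IntervalIntegrable u' volume c R := hu'.intervalIntegrable
  have hInt2 : IntervalIntegrable (fun x => Complex.I * a * e a x) volume c R :=
    ((continuous_const.mul (continuous_e a)).intervalIntegrable c R)
  have H := intervalIntegral.integral_mul_deriv_eq_deriv_mul hu hv hInt1 hInt2
  have hpull : ∫ x in c..R, u x * (Complex.I * a * e a x)
      = (Complex.I * a) * ∫ x in c..R, u x * e a x := by
    rw [← intervalIntegral.integral_const_mul]
    apply intervalIntegral.integral_congr
    intro x _
    ring
  rw [hpull] at H
  linear_combination H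

lemma iteratedDeriv_zero_fun (n : ℕ) (x : ℝ) : iteratedDeriv n (fun _ : ℝ => (0:ℂ)) x = 0 := by
  induction n generalizing x with
  | zero => simp
  | succ n ih =>
    rw [iteratedDeriv_succ]
    have : deriv (iteratedDeriv n (fun _ : ℝ => (0:ℂ))) x
        = deriv (fun _ : ℝ => (0:ℂ)) x := by
      apply Filter.EventuallyEq.deriv_eq
      filter_upwards with y using ih y
    rw [this, deriv_const]

lemma iteratedDeriv_eq_within {F : Type*} [NormedAddCommGroup F] [NormedSpace ℝ F]
    {f : ℝ → F} {z : ℝ} (hz : 1 < z) (n : ℕ) :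
    iteratedDeriv n f z = iteratedDerivWithin n f (Ici 1) z := by
  rw [iteratedDeriv_eq_iteratedFDeriv, iteratedDerivWithin_eq_iteratedFDerivWithin]
  congr 1
  have h1 : Ici (1:ℝ) ∈ 𝓝 z := Ici_mem_nhds hz
  have := iteratedFDerivWithin_inter (𝕜 := ℝ) (f := f) (s := univ) (n := n) (x := z) h1
  rw [univ_inter, iteratedFDerivWithin_univ] at this
  exact this.symm

end WinErr

open WinErr

set_option maxHeartbeats 1000000 in
/-- Super-algebraic windowing error for a general slowly decaying oscillatory
integrand: if `f` is smooth on `[1,∞)` with `|f^{(k)}(z)| ≤ C_k z^{−1/2−k}` for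
`k ≤ p`, and `w_A` is a slow-rise window (`w_A = 1` on `[0,αA]`, `w_A = 0` on
`[A,∞)`, `|w_A^{(k)}| ≤ M_k A^{−k}`), then the windowing error satisfies
`‖∫₁^∞ f e^{iaz} − ∫₁^∞ w_A f e^{iaz}‖ = O(a^{−p} A^{−p+1/2})`. -/
theorem windowing_error_superalgebraic (a α : ℝ) (ha : 0 < a)
    (hα : 0 < α) (hα1 : α < 1) (p : ℕ) (hp : 1 ≤ p)
    (f : ℝ → ℂ) (hf : ContDiffOn ℝ (⊤ : ℕ∞) f (Ici 1))
    (Cf : ℕ → ℝ)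
    (hfk : ∀ k ≤ p, ∀ z : ℝ, 1 ≤ z →
      ‖iteratedDerivWithin k f (Ici 1) z‖ ≤ Cf k * z ^ (-(1:ℝ)/2 - k))
    (M : ℕ → ℝ) (I : ℂ)
    (hI : Tendsto (fun R : ℝ => ∫ z in (1:ℝ)..R,
      f z * Complex.exp (Complex.I * (a * z))) atTop (nhds I)) :
    ∃ C : ℝ, ∀ A : ℝ, 1 ≤ A → ∀ w : ℝ → ℝ,
      ContDiff ℝ (⊤ : ℕ∞) w →
      (∀ z ∈ Icc (0:ℝ) (α * A), w z = 1) →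
      (∀ z : ℝ, A ≤ z → w z = 0) →
      (∀ k ≤ p, ∀ z : ℝ, |iteratedDeriv k w z| ≤ M k / A ^ k) →
      ‖I - ∫ z in Ici (1:ℝ), (w z : ℂ) * f z * Complex.exp (Complex.I * (a * z))‖
        ≤ C / a ^ p * A ^ (-(p : ℝ) + 1/2) := by
  classical
  have hf' : ContDiffOn ℝ ((⊤:ℕ∞) : WithTop ℕ∞) f (Ici 1) := hf.of_le (by simp)
  have hfC : ContinuousOn f (Ici 1) := hf'.continuousOn
  set cx : ℕ → ℝ := fun k => max (Cf k) 0 with hcx_def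
  set mx : ℕ → ℝ := fun k => max (M k) 0 with hmx_def
  set wb : ℕ → ℝ := fun j => if j = 0 then 1 + mx 0 else mx j with hwb_def
  have hcx0 : ∀ k, 0 ≤ cx k := fun k => le_max_right _ _
  have hmx0 : ∀ k, 0 ≤ mx k := fun k => le_max_right _ _
  have hwb0 : ∀ j, 0 ≤ wb j := by
    intro j
    by_cases h : j = 0 <;> simp [hwb_def, h] <;> positivity
  set A₀ : ℝ := max 1 α⁻¹ with hA₀_def
  have hA₀1 : (1:ℝ) ≤ A₀ := le_max_left _ _
  have hA₀pos : (0:ℝ) < A₀ := by linarith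
  set K1 : ℝ := ‖I‖ + mx 0 * cx 0 * A₀ with hK1_def
  have hK1nn : 0 ≤ K1 := by
    have := norm_nonneg I
    have h1 := hmx0 0
    have h2 := hcx0 0
    positivity
  set D0 : ℝ := α ^ (-(p:ℝ) - 1/2) *
    ∑ j ∈ Finset.range (p+1), (p.choose j : ℝ) * wb j * cx (p - j) with hD0_def
  have hD0nn : 0 ≤ D0 := by
    apply mul_nonneg (Real.rpow_nonneg hα.le _)
    apply Finset.sum_nonneg
    intro j _
    have := hwb0 j
    have := hcx0 (p - j)
    positivity
  set K3 : ℝ := 2 * cx p with hK3_def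
  have hK3nn : 0 ≤ K3 := by have := hcx0 p; positivity
  set Ka : ℝ := max (K1 * A₀ ^ ((p:ℝ) - 1/2)) ((D0 + K3) / a ^ p) with hKa_def
  refine ⟨Ka * a ^ p, ?_⟩
  intro A hA w hw hw1 hw0 hwk
  have hapos : (0:ℝ) < a ^ p := pow_pos ha p
  have hKasimp : Ka * a ^ p / a ^ p = Ka := by field_simp
  rw [hKasimp]
  have hApos : (0:ℝ) < A := by linarith
  -- notation
  set h : ℝ → ℂ := fun z => (w z : ℂ) * f z * e a z with hh_def
  set W : ℂ := ∫ z in Ici (1:ℝ), h z with hW_def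
  have hWgoal : (∫ z in Ici (1:ℝ), (w z : ℂ) * f z * Complex.exp (Complex.I * (a * z))) = W := rfl
  rw [hWgoal]
  -- basic bounds
  have hfb : ∀ k ≤ p, ∀ z : ℝ, 1 ≤ z →
      ‖iteratedDerivWithin k f (Ici 1) z‖ ≤ cx k * z ^ (-(1:ℝ)/2 - k) := by
    intro k hk z hz
    refine (hfk k hk z hz).trans ?_
    apply mul_le_mul_of_nonneg_right (le_max_left _ _) (Real.rpow_nonneg (by linarith) _)
  have hwb' : ∀ k ≤ p, ∀ z : ℝ, |iteratedDeriv k w z| ≤ mx k / A ^ k := by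
    intro k hk z
    refine (hwk k hk z).trans ?_
    exact (div_le_div_iff_of_pos_right (pow_pos hApos k)).mpr (le_max_left _ _)
  -- continuity of h
  have hwcont : Continuous w := hw.continuous
  have hhc : ContinuousOn h (Ici 1) := by
    apply ContinuousOn.mul
    apply ContinuousOn.mul
    · exact (Complex.continuous_ofReal.comp hwcont).continuousOn
    · exact hfC
    · exact (continuous_e a).continuousOn
  -- fundamental representation of W
  have hWIcc : ∀ R : ℝ, A ≤ R → W = ∫ z in Icc (1:ℝ) R, h z := by
    intro R hR
    have h1R : (1:ℝ) ≤ R := le_trans hA hR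
    have hsplit : Ici (1:ℝ) = Icc 1 R ∪ Ioi R := (Set.Icc_union_Ioi_eq_Ici h1R).symm
    have hdisj : Disjoint (Icc (1:ℝ) R) (Ioi R) := by
      rw [Set.disjoint_left]; intro z hz hz'; exact absurd hz.2 (not_le.mpr hz')
    have hint1 : IntegrableOn h (Icc (1:ℝ) R) volume :=
      (hhc.mono Icc_subset_Ici_self).integrableOn_Icc
    have hzero : EqOn h (fun _ => (0:ℂ)) (Ioi R) := by
      intro z hz
      have hz' := hw0 z (le_trans hR (le_of_lt hz))
      simp [hh_def, hz']
    have hint2 : IntegrableOn h (Ioi R) volume :=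
      (integrableOn_congr_fun hzero measurableSet_Ioi).mpr (integrableOn_zero)
    rw [hW_def, hsplit, setIntegral_union hdisj measurableSet_Ioi hint1 hint2,
      setIntegral_congr_fun measurableSet_Ioi hzero]
    simp
  have hWR : ∀ R : ℝ, A ≤ R → W = ∫ z in (1:ℝ)..R, h z := by
    intro R hR
    have h1R : (1:ℝ) ≤ R := by linarith
    rw [hWIcc R hR, MeasureTheory.integral_Icc_eq_integral_Ioc,
      intervalIntegral.integral_of_le h1R]
  by_cases hsmall : α * A ≤ 1
  · -- trivial regime
    have hAA₀ : A ≤ A₀ := by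
      have h1 : A ≤ α⁻¹ := by
        rw [← one_div, le_div_iff₀ hα]
        linarith [hsmall]
      exact h1.trans (le_max_right _ _)
    have hWb : ‖W‖ ≤ mx 0 * cx 0 * A₀ := by
      rw [hWIcc A le_rfl]
      have hvol : volume (Icc (1:ℝ) A) < ⊤ := by
        rw [Real.volume_Icc]; exact ENNReal.ofReal_lt_top
      have hpt : ∀ z ∈ Icc (1:ℝ) A, ‖h z‖ ≤ mx 0 * cx 0 := by
        intro z hz
        have hz1 : (1:ℝ) ≤ z := hz.1
        have hfz : ‖f z‖ ≤ cx 0 := by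
          have h2 := hfb 0 (Nat.zero_le p) z hz1
          rw [iteratedDerivWithin_zero] at h2
          refine h2.trans ?_
          have h3 : z ^ (-(1:ℝ)/2 - (0:ℕ)) ≤ 1 :=
            Real.rpow_le_one_of_one_le_of_nonpos hz1 (by norm_num)
          nlinarith [hcx0 0, Real.rpow_nonneg (by linarith : (0:ℝ) ≤ z) (-(1:ℝ)/2 - (0:ℕ))]
        have hwz : |w z| ≤ mx 0 := by
          have h4 := hwb' 0 (Nat.zero_le p) z; simpa using h4
        have he1 : ‖e a z‖ = 1 := by
          simpa using norm_e a z
        have : ‖h z‖ = |w z| * ‖f z‖ * 1 := by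
          simp [hh_def, norm_mul, he1]
        rw [this]
        have := norm_nonneg (f z)
        have := abs_nonneg (w z)
        nlinarith [hcx0 0, hmx0 0]
      have hnorm : ‖∫ z in Icc (1:ℝ) A, h z‖ ≤ (mx 0 * cx 0) * (volume (Icc (1:ℝ) A)).toReal :=
        norm_setIntegral_le_of_norm_le_const hvol hpt
      have hvt : (volume (Icc (1:ℝ) A)).toReal = A - 1 := by
        rw [Real.volume_Icc, ENNReal.toReal_ofReal (by linarith)]
      rw [hvt] at hnorm
      refine hnorm.trans ?_
      have h5 : A - 1 ≤ A₀ := by linarith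
      have hnn : 0 ≤ mx 0 * cx 0 := mul_nonneg (hmx0 0) (hcx0 0)
      exact mul_le_mul_of_nonneg_left h5 hnn
    have hEb : ‖I - W‖ ≤ K1 := by
      refine (norm_sub_le I W).trans ?_
      rw [hK1_def]
      linarith
    refine hEb.trans ?_
    -- K1 ≤ Ka * A ^ (-(p:ℝ) + 1/2)
    have hexp : A₀ ^ ((p:ℝ) - 1/2) * A₀ ^ (-(p:ℝ) + 1/2) = 1 := by
      rw [← Real.rpow_add hA₀pos]
      norm_num
    have hrA : A₀ ^ (-(p:ℝ) + 1/2) ≤ A ^ (-(p:ℝ) + 1/2) := by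
      apply Real.rpow_le_rpow_of_nonpos hApos hAA₀
      have : (1:ℝ) ≤ (p:ℝ) := by exact_mod_cast hp
      linarith
    calc K1 = K1 * (A₀ ^ ((p:ℝ) - 1/2) * A₀ ^ (-(p:ℝ) + 1/2)) := by rw [hexp, mul_one]
      _ = (K1 * A₀ ^ ((p:ℝ) - 1/2)) * A₀ ^ (-(p:ℝ) + 1/2) := by ring
      _ ≤ (K1 * A₀ ^ ((p:ℝ) - 1/2)) * A ^ (-(p:ℝ) + 1/2) := by
          apply mul_le_mul_of_nonneg_left hrA
          exact mul_nonneg hK1nn (Real.rpow_nonneg hA₀pos.le _)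
      _ ≤ Ka * A ^ (-(p:ℝ) + 1/2) := by
          apply mul_le_mul_of_nonneg_right (le_max_left _ _) (Real.rpow_nonneg hApos.le _)
  · -- main regime
    push_neg at hsmall
    set c' : ℝ := (1 + α * A) / 2 with hc'_def
    have hc'1 : 1 < c' := by rw [hc'_def]; linarith
    have hc'2 : c' < α * A := by rw [hc'_def]; linarith
    have hαA_lt_A : α * A < A := by nlinarith
    have hc'A : c' < A := by linarith
    set g : ℝ → ℂ := fun z => ((1:ℝ) - w z) • f z with hg_def
    set G : ℕ → ℝ → ℂ := fun n => iteratedDeriv n g with hG_def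
    have hGfun : ∀ n, G n = iteratedDeriv n g := fun _ => rfl
    set U : Set ℝ := Ioi (1:ℝ) with hU_def
    have hUopen : IsOpen U := isOpen_Ioi
    have hUsub : U ⊆ Ici (1:ℝ) := Ioi_subset_Ici_self
    have h1w : ContDiff ℝ ((⊤:ℕ∞) : WithTop ℕ∞) (fun z : ℝ => (1:ℝ) - w z) :=
      (contDiff_const.sub hw).of_le (by simp)
    have hgU : ContDiffOn ℝ ((⊤:ℕ∞) : WithTop ℕ∞) g U :=
      (h1w.contDiffOn.smul (hf'.mono hUsub))
    have hGU : ∀ n : ℕ, ContDiffOn ℝ ((⊤:ℕ∞) : WithTop ℕ∞) (G n) U := by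
      intro n
      induction n with
      | zero => rw [hGfun 0, iteratedDeriv_zero]; exact hgU
      | succ n ih =>
        have hGn : G (n+1) = deriv (G n) := by
          rw [hGfun, hGfun, iteratedDeriv_succ]
        rw [hGn]
        exact ih.deriv_of_isOpen hUopen (by exact_mod_cast le_top)
    have hGcont : ∀ n, ContinuousOn (fun z => G n z * e a z) U := fun n =>
      ((hGU n).continuousOn.mul (continuous_e a).continuousOn)
    have hGz : ∀ n, EqOn (G n) (fun _ => (0:ℂ)) (Ioo 1 (α * A)) := by
      intro n
      have hg0 : EqOn g (fun _ => (0:ℂ)) (Ioo 1 (α * A)) := by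
        intro z hz
        have hz1 : w z = 1 := hw1 z ⟨by linarith [hz.1], le_of_lt hz.2⟩
        simp [hg_def, hz1]
      intro z hz
      have h1 := hg0.iteratedDeriv_of_isOpen isOpen_Ioo n hz
      rw [hGfun]
      exact h1.trans (iteratedDeriv_zero_fun n z)
    have hGc' : ∀ n, G n c' = 0 := fun n => hGz n ⟨hc'1, hc'2⟩
    have hGf : ∀ n, ∀ z : ℝ, A < z → G n z = iteratedDerivWithin n f (Ici 1) z := by
      intro n z hz
      have hgf : EqOn g f (Ioi A) := by
        intro y hy
        have hy0 : w y = 0 := hw0 y (le_of_lt hy)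
        simp [hg_def, hy0]
      have h1 := hgf.iteratedDeriv_of_isOpen isOpen_Ioi n hz
      rw [hGfun]
      exact h1.trans (iteratedDeriv_eq_within (by linarith) n)
    -- Leibniz-type estimate in the transition region
    have hGmid : ∀ z : ℝ, α * A ≤ z → ‖G p z‖ ≤ D0 * A ^ (-(p:ℝ) - 1/2) := by
      intro z hzl
      have hz1 : 1 < z := lt_of_lt_of_le hsmall hzl
      have hzIci : z ∈ Ici (1:ℝ) := le_of_lt hz1
      have hrw : ‖G p z‖ = ‖iteratedFDerivWithin ℝ p g (Ici 1) z‖ := by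
        rw [hGfun, iteratedDeriv_eq_within hz1 p,
          ← norm_iteratedFDerivWithin_eq_norm_iteratedDerivWithin]
      rw [hrw, hg_def]
      have hpN : (p : WithTop ℕ∞) ≤ ((⊤:ℕ∞) : WithTop ℕ∞) := by exact_mod_cast le_top
      have hsmul := norm_iteratedFDerivWithin_smul_le
        (𝕜 := ℝ) (f := fun z : ℝ => (1:ℝ) - w z) (g := f) (s := Ici (1:ℝ))
        (N := ((⊤:ℕ∞) : WithTop ℕ∞))
        (h1w.contDiffOn) hf' (uniqueDiffOn_Ici 1) hzIci
        (n := p) hpN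
      refine hsmul.trans ?_
      have hαA0 : (0:ℝ) < α * A := by linarith
      have hterm : ∀ j ∈ Finset.range (p+1),
          (p.choose j : ℝ) * ‖iteratedFDerivWithin ℝ j (fun z : ℝ => (1:ℝ) - w z) (Ici 1) z‖ *
            ‖iteratedFDerivWithin ℝ (p - j) f (Ici 1) z‖
          ≤ ((p.choose j : ℝ) * wb j * cx (p - j)) *
              (α ^ (-(p:ℝ) - 1/2) * A ^ (-(p:ℝ) - 1/2)) := by
        intro j hjmem
        have hj : j ≤ p := Nat.lt_succ_iff.mp (Finset.mem_range.mp hjmem)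
        have hcast : ((p - j : ℕ) : ℝ) = (p : ℝ) - (j : ℝ) := Nat.cast_sub hj
        have hq0 : -(1:ℝ)/2 - ((p - j : ℕ) : ℝ) ≤ 0 := by
          have h0 : (0:ℝ) ≤ ((p - j : ℕ) : ℝ) := Nat.cast_nonneg _
          linarith
        have hXb : ‖iteratedFDerivWithin ℝ j (fun z : ℝ => (1:ℝ) - w z) (Ici 1) z‖
            ≤ wb j / A ^ j := by
          rw [norm_iteratedFDerivWithin_eq_norm_iteratedDerivWithin,
            ← iteratedDeriv_eq_within hz1 j, Real.norm_eq_abs]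
          rcases Nat.eq_zero_or_pos j with hj0 | hjpos
          · subst hj0
            rw [iteratedDeriv_zero]
            have hb0 := hwb' 0 (Nat.zero_le p) z
            rw [pow_zero, div_one, iteratedDeriv_zero] at hb0
            have habs : |1 - w z| ≤ 1 + |w z| := by
              rw [sub_eq_add_neg]
              refine (abs_add_le _ _).trans ?_
              rw [abs_one, abs_neg]
            have hwbeq : wb 0 = 1 + mx 0 := by simp [hwb_def]
            rw [pow_zero, div_one, hwbeq]
            linarith
          · have hne : iteratedDeriv j (fun z : ℝ => (1:ℝ) - w z) z
                = -(iteratedDeriv j w z) := by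
              rw [← iteratedDerivWithin_univ, ← iteratedDerivWithin_univ,
                iteratedDerivWithin_const_sub hjpos,
                iteratedDerivWithin_fun_neg]
            rw [hne, abs_neg]
            have hwbeq : wb j = mx j := by
              simp [hwb_def, Nat.pos_iff_ne_zero.mp hjpos]
            rw [hwbeq]
            exact hwb' j hj z
        have hYb : ‖iteratedFDerivWithin ℝ (p - j) f (Ici 1) z‖
            ≤ cx (p - j) * z ^ (-(1:ℝ)/2 - ((p - j : ℕ) : ℝ)) := by
          rw [norm_iteratedFDerivWithin_eq_norm_iteratedDerivWithin]
          exact hfb (p - j) (Nat.sub_le p j) z (le_of_lt hz1)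
        have hz_q : z ^ (-(1:ℝ)/2 - ((p - j : ℕ) : ℝ))
            ≤ α ^ (-(1:ℝ)/2 - ((p - j : ℕ) : ℝ)) * A ^ (-(1:ℝ)/2 - ((p - j : ℕ) : ℝ)) := by
          have h1 : z ^ (-(1:ℝ)/2 - ((p - j : ℕ) : ℝ)) ≤ (α * A) ^ (-(1:ℝ)/2 - ((p - j : ℕ) : ℝ)) :=
            Real.rpow_le_rpow_of_nonpos hαA0 hzl hq0
          rwa [Real.mul_rpow hα.le hApos.le] at h1
        have hαq : α ^ (-(1:ℝ)/2 - ((p - j : ℕ) : ℝ)) ≤ α ^ (-(p:ℝ) - 1/2) := by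
          apply Real.rpow_le_rpow_of_exponent_ge hα hα1.le
          rw [hcast]
          have h0 : (0:ℝ) ≤ (j:ℝ) := Nat.cast_nonneg _
          linarith
        have hAA : A ^ (-(1:ℝ)/2 - ((p - j : ℕ) : ℝ)) / A ^ j = A ^ (-(p:ℝ) - 1/2) := by
          rw [← Real.rpow_natCast A j, ← Real.rpow_sub hApos]
          congr 1
          rw [hcast]; ring
        have hXnn : (0:ℝ) ≤ wb j / A ^ j := div_nonneg (hwb0 j) (pow_nonneg hApos.le j)
        have step1 : ‖iteratedFDerivWithin ℝ j (fun z : ℝ => (1:ℝ) - w z) (Ici 1) z‖ *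
              ‖iteratedFDerivWithin ℝ (p - j) f (Ici 1) z‖
            ≤ (wb j / A ^ j) * (cx (p - j) * z ^ (-(1:ℝ)/2 - ((p - j : ℕ) : ℝ))) :=
          mul_le_mul hXb hYb (norm_nonneg _) hXnn
        have step2 : (wb j / A ^ j) * (cx (p - j) * z ^ (-(1:ℝ)/2 - ((p - j : ℕ) : ℝ)))
            ≤ (wb j / A ^ j) * (cx (p - j) *
                (α ^ (-(1:ℝ)/2 - ((p - j : ℕ) : ℝ)) * A ^ (-(1:ℝ)/2 - ((p - j : ℕ) : ℝ)))) :=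
          mul_le_mul_of_nonneg_left (mul_le_mul_of_nonneg_left hz_q (hcx0 _)) hXnn
        have step3 : (wb j / A ^ j) * (cx (p - j) *
              (α ^ (-(1:ℝ)/2 - ((p - j : ℕ) : ℝ)) * A ^ (-(1:ℝ)/2 - ((p - j : ℕ) : ℝ))))
            = wb j * cx (p - j) * (α ^ (-(1:ℝ)/2 - ((p - j : ℕ) : ℝ)) *
                (A ^ (-(1:ℝ)/2 - ((p - j : ℕ) : ℝ)) / A ^ j)) := by
          ring
        have step4 : wb j * cx (p - j) * (α ^ (-(1:ℝ)/2 - ((p - j : ℕ) : ℝ)) *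
              (A ^ (-(1:ℝ)/2 - ((p - j : ℕ) : ℝ)) / A ^ j))
            ≤ wb j * cx (p - j) * (α ^ (-(p:ℝ) - 1/2) * A ^ (-(p:ℝ) - 1/2)) := by
          rw [hAA]
          apply mul_le_mul_of_nonneg_left
          · exact mul_le_mul_of_nonneg_right hαq (Real.rpow_nonneg hApos.le _)
          · exact mul_nonneg (hwb0 j) (hcx0 _)
        calc (p.choose j : ℝ) * ‖iteratedFDerivWithin ℝ j (fun z : ℝ => (1:ℝ) - w z) (Ici 1) z‖ *
              ‖iteratedFDerivWithin ℝ (p - j) f (Ici 1) z‖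
            = (p.choose j : ℝ) * (‖iteratedFDerivWithin ℝ j (fun z : ℝ => (1:ℝ) - w z) (Ici 1) z‖ *
              ‖iteratedFDerivWithin ℝ (p - j) f (Ici 1) z‖) := by ring
          _ ≤ (p.choose j : ℝ) * (wb j * cx (p - j) * (α ^ (-(p:ℝ) - 1/2) * A ^ (-(p:ℝ) - 1/2))) := by
              apply mul_le_mul_of_nonneg_left _ (Nat.cast_nonneg _)
              exact ((step1.trans step2).trans_eq step3).trans step4
          _ = ((p.choose j : ℝ) * wb j * cx (p - j)) * (α ^ (-(p:ℝ) - 1/2) * A ^ (-(p:ℝ) - 1/2)) := by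
              ring
      refine (Finset.sum_le_sum hterm).trans (le_of_eq ?_)
      rw [← Finset.sum_mul, hD0_def]
      ring
    -- pointwise integrand identity
    have hgpt : ∀ z : ℝ, g z * e a z = f z * e a z - h z := by
      intro z
      have : g z = f z - (w z : ℂ) * f z := by
        rw [hg_def]
        simp only []
        rw [Complex.real_smul]
        push_cast
        ring
      rw [this, hh_def]
      ring
    have hgc : ContinuousOn (fun z => g z * e a z) (Ici 1) :=
      ((continuous_const.sub hwcont).continuousOn.smul hfC).mul (continuous_e a).continuousOn
    -- base case of the induction
    have hbase : Tendsto (fun R => ∫ z in c'..R, G 0 z * e a z) atTop (𝓝 (I - W)) := by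
      have hG0 : ∀ z : ℝ, G 0 z = g z := by intro z; rw [hGfun, iteratedDeriv_zero]
      have hev : ∀ᶠ R in atTop, (∫ z in (1:ℝ)..R, f z * e a z) - W
          = ∫ z in c'..R, G 0 z * e a z := by
        filter_upwards [eventually_ge_atTop (max A c')] with R hR
        have hRA : A ≤ R := le_trans (le_max_left _ _) hR
        have hRc : c' ≤ R := le_trans (le_max_right _ _) hR
        have h1R : (1:ℝ) ≤ R := le_trans hA hRA
        have hsub1 : uIcc (1:ℝ) c' ⊆ Ici (1:ℝ) := by
          rw [uIcc_of_le hc'1.le]; exact Icc_subset_Ici_self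
        have hsub2 : uIcc c' R ⊆ Ici (1:ℝ) := by
          rw [uIcc_of_le hRc]
          exact (Icc_subset_Ici_self).trans (Ici_subset_Ici.mpr hc'1.le)
        have hsub3 : uIcc (1:ℝ) R ⊆ Ici (1:ℝ) := by
          rw [uIcc_of_le h1R]; exact Icc_subset_Ici_self
        have hint1 : IntervalIntegrable (fun z => g z * e a z) volume 1 c' :=
          (hgc.mono hsub1).intervalIntegrable
        have hint2 : IntervalIntegrable (fun z => g z * e a z) volume c' R :=
          (hgc.mono hsub2).intervalIntegrable
        have hintf : IntervalIntegrable (fun z => f z * e a z) volume 1 R :=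
          ((hfC.mul (continuous_e a).continuousOn).mono hsub3).intervalIntegrable
        have hinth : IntervalIntegrable h volume 1 R := (hhc.mono hsub3).intervalIntegrable
        have hsplit := intervalIntegral.integral_add_adjacent_intervals hint1 hint2
        have hzero1 : ∫ z in (1:ℝ)..c', g z * e a z = 0 := by
          have heq0 : EqOn (fun z => g z * e a z) (fun _ => (0:ℂ)) (uIcc 1 c') := by
            intro z hz
            rw [uIcc_of_le hc'1.le] at hz
            have hwz : w z = 1 := hw1 z ⟨by linarith [hz.1], by linarith [hz.2, hc'2.le]⟩
            simp [hg_def, hwz]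
          rw [intervalIntegral.integral_congr heq0, intervalIntegral.integral_zero]
        have heq2 : ∫ z in (1:ℝ)..R, g z * e a z
            = (∫ z in (1:ℝ)..R, f z * e a z) - ∫ z in (1:ℝ)..R, h z := by
          rw [← intervalIntegral.integral_sub hintf hinth]
          apply intervalIntegral.integral_congr
          intro z _
          exact hgpt z
        have hc'R : ∫ z in c'..R, G 0 z * e a z = ∫ z in c'..R, g z * e a z := by
          apply intervalIntegral.integral_congr
          intro z _
          simp only [hG0]
        rw [hc'R]
        have hfin : ∫ z in c'..R, g z * e a z
            = (∫ z in (1:ℝ)..R, g z * e a z) - ∫ z in (1:ℝ)..c', g z * e a z := by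
          rw [eq_sub_iff_add_eq, add_comm]
          exact hsplit
        rw [hfin, hzero1, heq2, ← hWR R hRA]
        ring
      have htend : Tendsto (fun R => (∫ z in (1:ℝ)..R, f z * e a z) - W) atTop (𝓝 (I - W)) :=
        hI.sub_const W
      exact Tendsto.congr' hev htend
    -- the induction on integration by parts
    have hclaim : ∀ n, n ≤ p →
        Tendsto (fun R => ∫ z in c'..R, G n z * e a z) atTop
          (𝓝 ((-(Complex.I * a)) ^ n * (I - W))) := by
      intro n
      induction n with
      | zero => intro _; simpa using hbase
      | succ n ih =>
        intro hn1
        have hn : n ≤ p := Nat.le_of_succ_le hn1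
        have htn := ih hn
        have hB : Tendsto (fun R => G n R * e a R) atTop (𝓝 (0:ℂ)) := by
          have hb1 : ∀ᶠ R in atTop, ‖G n R * e a R‖ ≤ cx n * R ^ (-(1:ℝ)/2) := by
            filter_upwards [eventually_gt_atTop A, eventually_ge_atTop (1:ℝ)] with R hRA hR1
            rw [norm_mul, norm_e, mul_one, hGf n R hRA]
            refine (hfb n hn R hR1).trans ?_
            apply mul_le_mul_of_nonneg_left _ (hcx0 n)
            apply Real.rpow_le_rpow_of_exponent_le hR1
            have h0 : (0:ℝ) ≤ (n:ℝ) := Nat.cast_nonneg n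
            linarith
          have hb2 : Tendsto (fun R : ℝ => cx n * R ^ (-(1:ℝ)/2)) atTop (𝓝 0) := by
            have h00 := tendsto_rpow_neg_atTop (y := (1:ℝ)/2) (by norm_num)
            have hxx : -((1:ℝ)/2) = -(1:ℝ)/2 := by norm_num
            rw [hxx] at h00
            simpa using h00.const_mul (cx n)
          exact squeeze_zero_norm' hb1 hb2
        have hev : ∀ᶠ R in atTop,
            G n R * e a R - (Complex.I * a) * ∫ z in c'..R, G n z * e a z
            = ∫ z in c'..R, G (n+1) z * e a z := by
          filter_upwards [eventually_ge_atTop c'] with R hRc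
          have huIcc : uIcc c' R ⊆ U := by
            rw [uIcc_of_le hRc]
            intro x hx
            exact lt_of_lt_of_le hc'1 hx.1
          have hu : ∀ x ∈ uIcc c' R, HasDerivAt (G n) (G (n+1) x) x := by
            intro x hx
            have hxU : x ∈ U := huIcc hx
            have hca : ContDiffAt ℝ ((⊤:ℕ∞):WithTop ℕ∞) (G n) x :=
              (hGU n).contDiffAt (hUopen.mem_nhds hxU)
            have hd : DifferentiableAt ℝ (G n) x :=
              hca.differentiableAt (by simp)
            have hda := hd.hasDerivAt
            have hsucc : deriv (G n) x = G (n+1) x := by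
              rw [hGfun, hGfun, iteratedDeriv_succ]
            rwa [hsucc] at hda
          have hu' : ContinuousOn (G (n+1)) (uIcc c' R) := (hGU (n+1)).continuousOn.mono huIcc
          have hibp := ibp a c' R (G n) (G (n+1)) hu hu'
          rw [hibp, hGc' n]
          ring
        have hlim : Tendsto (fun R => G n R * e a R -
              (Complex.I * a) * ∫ z in c'..R, G n z * e a z) atTop
            (𝓝 ((0:ℂ) - (Complex.I * a) * ((-(Complex.I * a)) ^ n * (I - W)))) :=
          hB.sub (htn.const_mul _)
        have hval : (0 : ℂ) - (Complex.I * a) * ((-(Complex.I * a)) ^ n * (I - W))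
            = (-(Complex.I * a)) ^ (n+1) * (I - W) := by ring
        rw [hval] at hlim
        exact Tendsto.congr' hev hlim
    have htp := hclaim p le_rfl
    -- uniform bound on the truncated integrals
    have hbound : ∀ᶠ R in atTop,
        ‖∫ z in c'..R, G p z * e a z‖ ≤ (D0 + K3) * A ^ (-(p:ℝ) + 1/2) := by
      filter_upwards [eventually_ge_atTop A] with R hRA
      have hc'αA : c' ≤ α * A := hc'2.le
      have hαAA : α * A ≤ A := hαA_lt_A.le
      have hi1 : IntervalIntegrable (fun z => G p z * e a z) volume c' (α*A) := by
        apply ContinuousOn.intervalIntegrable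
        apply (hGcont p).mono
        rw [uIcc_of_le hc'αA]
        intro x hx
        exact lt_of_lt_of_le hc'1 hx.1
      have hi2 : IntervalIntegrable (fun z => G p z * e a z) volume (α*A) A := by
        apply ContinuousOn.intervalIntegrable
        apply (hGcont p).mono
        rw [uIcc_of_le hαAA]
        intro x hx
        exact lt_of_lt_of_le hsmall hx.1
      have hi3 : IntervalIntegrable (fun z => G p z * e a z) volume A R := by
        apply ContinuousOn.intervalIntegrable
        apply (hGcont p).mono
        rw [uIcc_of_le hRA]
        intro x hx
        have h1A : (1:ℝ) < A := by nlinarith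
        exact lt_of_lt_of_le h1A hx.1
      have hsplit1 := intervalIntegral.integral_add_adjacent_intervals hi1 hi2
      have hsplit2 := intervalIntegral.integral_add_adjacent_intervals (hi1.trans hi2) hi3
      have hpiece1 : ∫ z in c'..(α*A), G p z * e a z = 0 := by
        rw [intervalIntegral.integral_of_le hc'αA, MeasureTheory.integral_Ioc_eq_integral_Ioo]
        rw [MeasureTheory.setIntegral_congr_fun (g := fun _ => (0:ℂ)) measurableSet_Ioo ?_]
        · simp
        · intro z hz
          have hz0 : G p z = 0 := hGz p ⟨lt_trans hc'1 hz.1, hz.2⟩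
          simp [hz0]
      have hpiece2 : ‖∫ z in (α*A)..A, G p z * e a z‖
          ≤ (D0 * A ^ (-(p:ℝ) - 1/2)) * |A - α*A| := by
        apply intervalIntegral.norm_integral_le_of_norm_le_const
        intro z hz
        rw [uIoc_of_le hαAA] at hz
        rw [norm_mul, norm_e, mul_one]
        exact hGmid z hz.1.le
      have hpiece2' : ‖∫ z in (α*A)..A, G p z * e a z‖ ≤ D0 * A ^ (-(p:ℝ) + 1/2) := by
        refine hpiece2.trans ?_
        have hlen : |A - α*A| ≤ A := by
          rw [abs_of_nonneg (by nlinarith)]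
          nlinarith
        have hmul : (D0 * A ^ (-(p:ℝ) - 1/2)) * |A - α*A| ≤ (D0 * A ^ (-(p:ℝ) - 1/2)) * A :=
          mul_le_mul_of_nonneg_left hlen (mul_nonneg hD0nn (Real.rpow_nonneg hApos.le _))
        refine hmul.trans (le_of_eq ?_)
        rw [mul_assoc]
        congr 1
        rw [show A ^ (-(p:ℝ) - 1/2) * A = A ^ (-(p:ℝ) - 1/2) * A ^ (1:ℝ) by
          rw [Real.rpow_one]]
        rw [← Real.rpow_add hApos]
        congr 1
        ring
      have hpiece3 : ‖∫ z in A..R, G p z * e a z‖ ≤ K3 * A ^ (-(p:ℝ) + 1/2) := by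
        have hrcont : ContinuousOn (fun z : ℝ => cx p * z ^ (-(1:ℝ)/2 - (p:ℝ))) (uIcc A R) := by
          apply continuousOn_const.mul
          apply ContinuousOn.rpow_const continuousOn_id
          intro z hz
          rw [uIcc_of_le hRA] at hz
          left
          have : (0:ℝ) < z := lt_of_lt_of_le hApos hz.1
          exact ne_of_gt this
        have hInt : IntervalIntegrable (fun z : ℝ => cx p * z ^ (-(1:ℝ)/2 - (p:ℝ))) volume A R :=
          hrcont.intervalIntegrable
        have hae : ∀ᵐ t ∂(volume.restrict (Set.uIoc A R)),
            ‖G p t * e a t‖ ≤ cx p * t ^ (-(1:ℝ)/2 - (p:ℝ)) := by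
          rw [ae_restrict_iff' measurableSet_uIoc]
          filter_upwards with z hz
          rw [uIoc_of_le hRA] at hz
          have hzA : A < z := hz.1
          rw [norm_mul, norm_e, mul_one, hGf p z hzA]
          have h1z : (1:ℝ) ≤ z := by linarith
          exact hfb p le_rfl z h1z
        have hnle := intervalIntegral.norm_integral_le_abs_of_norm_le hae hInt
        refine hnle.trans ?_
        have hne1 : -(1:ℝ)/2 - (p:ℝ) ≠ -1 := by
          have h1 : (1:ℝ) ≤ (p:ℝ) := by exact_mod_cast hp
          intro hh
          linarith
        have h0not : (0:ℝ) ∉ uIcc A R := by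
          rw [uIcc_of_le hRA]
          intro h0
          linarith [h0.1]
        have hcalc : ∫ z in A..R, cx p * z ^ (-(1:ℝ)/2 - (p:ℝ))
            = cx p * ((R ^ (-(1:ℝ)/2 - (p:ℝ) + 1) - A ^ (-(1:ℝ)/2 - (p:ℝ) + 1))
                / (-(1:ℝ)/2 - (p:ℝ) + 1)) := by
          rw [intervalIntegral.integral_const_mul, integral_rpow (Or.inr ⟨hne1, h0not⟩)]
        have hexp : -(1:ℝ)/2 - (p:ℝ) + 1 = -(p:ℝ) + 1/2 := by ring
        rw [hcalc, hexp]
        have h1p : (1:ℝ) ≤ (p:ℝ) := by exact_mod_cast hp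
        have heneg : -(p:ℝ) + 1/2 ≤ 0 := by linarith
        have hRe0 : (0:ℝ) ≤ R ^ (-(p:ℝ) + 1/2) := Real.rpow_nonneg (by linarith) _
        have hAe0 : (0:ℝ) ≤ A ^ (-(p:ℝ) + 1/2) := Real.rpow_nonneg hApos.le _
        have hq_nonneg : 0 ≤ (R ^ (-(p:ℝ) + 1/2) - A ^ (-(p:ℝ) + 1/2)) / (-(p:ℝ) + 1/2) := by
          rw [div_nonneg_iff]
          right
          constructor
          · have : R ^ (-(p:ℝ) + 1/2) ≤ A ^ (-(p:ℝ) + 1/2) :=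
              Real.rpow_le_rpow_of_nonpos hApos hRA heneg
            linarith
          · linarith
        have habs : |cx p * ((R ^ (-(p:ℝ) + 1/2) - A ^ (-(p:ℝ) + 1/2)) / (-(p:ℝ) + 1/2))|
            = cx p * ((R ^ (-(p:ℝ) + 1/2) - A ^ (-(p:ℝ) + 1/2)) / (-(p:ℝ) + 1/2)) :=
          abs_of_nonneg (mul_nonneg (hcx0 p) hq_nonneg)
        rw [habs]
        have hqle : (R ^ (-(p:ℝ) + 1/2) - A ^ (-(p:ℝ) + 1/2)) / (-(p:ℝ) + 1/2)
            ≤ 2 * A ^ (-(p:ℝ) + 1/2) := by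
          have hrw2 : (R ^ (-(p:ℝ) + 1/2) - A ^ (-(p:ℝ) + 1/2)) / (-(p:ℝ) + 1/2)
              = (A ^ (-(p:ℝ) + 1/2) - R ^ (-(p:ℝ) + 1/2)) / ((p:ℝ) - 1/2) := by
            rw [div_eq_div_iff (by linarith) (by linarith)]
            ring
          rw [hrw2]
          have hdiv : (A ^ (-(p:ℝ) + 1/2) - R ^ (-(p:ℝ) + 1/2)) / ((p:ℝ) - 1/2)
              ≤ A ^ (-(p:ℝ) + 1/2) / (1/2) := by
            apply div_le_div₀ hAe0 (by linarith) (by norm_num) (by linarith)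
          refine hdiv.trans (le_of_eq ?_)
          ring
        calc cx p * ((R ^ (-(p:ℝ) + 1/2) - A ^ (-(p:ℝ) + 1/2)) / (-(p:ℝ) + 1/2))
            ≤ cx p * (2 * A ^ (-(p:ℝ) + 1/2)) :=
              mul_le_mul_of_nonneg_left hqle (hcx0 p)
          _ = K3 * A ^ (-(p:ℝ) + 1/2) := by rw [hK3_def]; ring
      have hdecomp : ∫ z in c'..R, G p z * e a z
          = (∫ z in c'..(α*A), G p z * e a z) + (∫ z in (α*A)..A, G p z * e a z)
            + (∫ z in A..R, G p z * e a z) := by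
        rw [← hsplit2, ← hsplit1]
      calc ‖∫ z in c'..R, G p z * e a z‖
          = ‖(∫ z in c'..(α*A), G p z * e a z) + (∫ z in (α*A)..A, G p z * e a z)
              + (∫ z in A..R, G p z * e a z)‖ := by rw [← hdecomp]
        _ ≤ ‖(∫ z in c'..(α*A), G p z * e a z) + (∫ z in (α*A)..A, G p z * e a z)‖
              + ‖∫ z in A..R, G p z * e a z‖ := norm_add_le _ _
        _ ≤ ‖∫ z in c'..(α*A), G p z * e a z‖ + ‖∫ z in (α*A)..A, G p z * e a z‖
              + ‖∫ z in A..R, G p z * e a z‖ := by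
            have := norm_add_le (∫ z in c'..(α*A), G p z * e a z)
              (∫ z in (α*A)..A, G p z * e a z)
            linarith
        _ ≤ 0 + D0 * A ^ (-(p:ℝ) + 1/2) + K3 * A ^ (-(p:ℝ) + 1/2) := by
            have h01 : ‖∫ z in c'..(α*A), G p z * e a z‖ = 0 := by rw [hpiece1]; simp
            rw [h01]
            linarith [hpiece2', hpiece3]
        _ = (D0 + K3) * A ^ (-(p:ℝ) + 1/2) := by ring
    -- conclude
    have hfinal : ‖(-(Complex.I * a)) ^ p * (I - W)‖ ≤ (D0 + K3) * A ^ (-(p:ℝ) + 1/2) :=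
      le_of_tendsto htp.norm hbound
    have hnorm_eq : ‖(-(Complex.I * (a:ℂ))) ^ p * (I - W)‖ = a ^ p * ‖I - W‖ := by
      rw [norm_mul, norm_pow, norm_neg]
      congr 2
      simp [abs_of_pos ha]
    rw [hnorm_eq] at hfinal
    have hEW : ‖I - W‖ ≤ (D0 + K3) / a ^ p * A ^ (-(p:ℝ) + 1/2) := by
      rw [div_mul_eq_mul_div, le_div_iff₀ hapos]
      calc ‖I - W‖ * a ^ p = a ^ p * ‖I - W‖ := by ring
        _ ≤ (D0 + K3) * A ^ (-(p:ℝ) + 1/2) := hfinal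
    refine hEW.trans ?_
    apply mul_le_mul_of_nonneg_right (le_max_right _ _) (Real.rpow_nonneg hApos.le _)
end
end

section
/- Number of symmetric TE modes: for h > 0 and 0 < k_cl < k_co, the number of solutions k_z ∈ (k_cl, k_co) of γ_cl = γ_co tan(γ_co h) (with γ_co = √(k_co² − k_z²), γ_cl = √(k_z² − k_cl²)) is exactly ⌊V/π⌋ + 1, where V = h√(k_co² − k_cl²), provided V/π is not an integer and tan is interpreted on each branch. -/
open Set

/-- cos is nonzero on `[mπ, mπ + π/2)`. -/
lemma cos_ne_zero_branch (m : ℕ) {x : ℝ} (h1 : (m : ℝ) * Real.pi ≤ x)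
    (h2 : x < (m : ℝ) * Real.pi + Real.pi / 2) : Real.cos x ≠ 0 := by
  intro hc
  rw [Real.cos_eq_zero_iff] at hc
  obtain ⟨k, hk⟩ := hc
  have hπ := Real.pi_pos
  rw [hk] at h1 h2
  have hk1 : 2 * (m : ℝ) ≤ 2 * (k : ℝ) + 1 := by nlinarith
  have hk2 : 2 * (k : ℝ) + 1 < 2 * (m : ℝ) + 1 := by nlinarith
  have hk1' : 2 * (m : ℤ) ≤ 2 * k + 1 := by exact_mod_cast hk1
  have hk2' : 2 * (k : ℤ) + 1 < 2 * (m : ℤ) + 1 := by exact_mod_cast hk2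
  omega

/-- Existence of a solution on each branch. -/
lemma exists_branch_solution (V : ℝ) (hV : 0 < V) (m : ℕ)
    (hm : (m : ℝ) * Real.pi < V) :
    ∃ τ : ℝ, (m : ℝ) * Real.pi < τ ∧ τ < (m : ℝ) * Real.pi + Real.pi / 2 ∧ τ < V ∧
      Real.sqrt (V ^ 2 - τ ^ 2) = τ * Real.tan τ := by
  have hπ := Real.pi_pos
  set a : ℝ := (m : ℝ) * Real.pi with ha
  have ha0 : 0 ≤ a := by positivity
  set G : ℝ → ℝ := fun τ => τ * Real.tan τ - Real.sqrt (V ^ 2 - τ ^ 2) with hG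
  have hcont : ∀ b : ℝ, b < a + Real.pi / 2 → ContinuousOn G (Icc a b) := by
    intro b hb
    apply ContinuousOn.sub
    · apply ContinuousOn.mul continuousOn_id
      intro x hx
      exact (Real.continuousAt_tan.2
        (cos_ne_zero_branch m hx.1 (lt_of_le_of_lt hx.2 hb))).continuousWithinAt
    · fun_prop
  have hGa : G a < 0 := by
    have htan : Real.tan a = 0 := Real.tan_nat_mul_pi m
    have hs : 0 < Real.sqrt (V ^ 2 - a ^ 2) := Real.sqrt_pos.2 (by nlinarith)
    simp only [hG, htan, mul_zero, zero_sub, neg_lt_zero]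
    exact hs
  by_cases hcase : V < a + Real.pi / 2
  · -- branch ends at V
    have hGV : 0 < G V := by
      have h0 : Real.sqrt (V ^ 2 - V ^ 2) = 0 := by simp
      have htan : Real.tan (V - (m : ℕ) * Real.pi) = Real.tan V :=
        Real.tan_sub_nat_mul_pi V m
      have hpos : 0 < Real.tan (V - (m : ℕ) * Real.pi) :=
        Real.tan_pos_of_pos_of_lt_pi_div_two (by push_cast; linarith) (by push_cast; linarith)
      rw [htan] at hpos
      simp only [hG, h0, sub_zero]
      exact mul_pos hV hpos
    have hivt := intermediate_value_Ioo hm.le (hcont V hcase)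
    have h0mem : (0 : ℝ) ∈ Ioo (G a) (G V) := ⟨hGa, hGV⟩
    obtain ⟨τ, hτIoo, hGτ⟩ := hivt h0mem
    exact ⟨τ, hτIoo.1, lt_trans hτIoo.2 hcase, hτIoo.2, by
      simp only [hG] at hGτ; linarith⟩
  · -- branch ends before (m+1/2)π ≤ V
    push_neg at hcase
    set M : ℝ := 4 * (V + 1) with hM
    set c : ℝ := a + Real.arctan M with hc
    have hM1 : (1 : ℝ) < M := by simp only [hM]; linarith
    have harc1 : Real.pi / 4 < Real.arctan M := by
      have := Real.arctan_strictMono hM1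
      rwa [Real.arctan_one] at this
    have harc2 : Real.arctan M < Real.pi / 2 := Real.arctan_lt_pi_div_two M
    have hac : a < c := by simp only [hc]; nlinarith
    have hcb : c < a + Real.pi / 2 := by simp only [hc]; linarith
    have hcV : c < V := lt_of_lt_of_le hcb hcase
    have htanc : Real.tan c = M := by
      have : Real.tan (Real.arctan M + (m : ℕ) * Real.pi) = Real.tan (Real.arctan M) :=
        Real.tan_add_nat_mul_pi _ m
      rw [Real.tan_arctan] at this
      simp only [hc, ha]
      rw [add_comm]
      exact this
    have hGc : 0 < G c := by
      have hsle : Real.sqrt (V ^ 2 - c ^ 2) ≤ V := by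
        calc Real.sqrt (V ^ 2 - c ^ 2) ≤ Real.sqrt (V ^ 2) :=
              Real.sqrt_le_sqrt (by nlinarith)
          _ = V := Real.sqrt_sq hV.le
      have hcquarter : Real.pi / 4 < c := by
        have : Real.pi / 4 < Real.arctan M := harc1
        simp only [hc]; linarith
      have hπ3 := Real.pi_gt_three
      have hcM : V < c * Real.tan c := by
        rw [htanc]
        have : Real.pi / 4 * M ≤ c * M := by
          apply mul_le_mul_of_nonneg_right hcquarter.le (by linarith)
        simp only [hM] at this ⊢
        nlinarith
      simp only [hG]
      linarith
    have hivt := intermediate_value_Ioo hac.le (hcont c hcb)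
    have h0mem : (0 : ℝ) ∈ Ioo (G a) (G c) := ⟨hGa, hGc⟩
    obtain ⟨τ, hτIoo, hGτ⟩ := hivt h0mem
    exact ⟨τ, hτIoo.1, lt_trans hτIoo.2 hcb, lt_trans hτIoo.2 hcV, by
      simp only [hG] at hGτ; linarith⟩

/-- Uniqueness of the solution on each branch. -/
lemma unique_branch (V : ℝ) (m : ℕ) {x y : ℝ}
    (hx1 : (m : ℝ) * Real.pi < x) (hx2 : x < (m : ℝ) * Real.pi + Real.pi / 2)
    (hy1 : (m : ℝ) * Real.pi < y) (hy2 : y < (m : ℝ) * Real.pi + Real.pi / 2)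
    (hex : Real.sqrt (V ^ 2 - x ^ 2) = x * Real.tan x)
    (hey : Real.sqrt (V ^ 2 - y ^ 2) = y * Real.tan y) : x = y := by
  have hπ := Real.pi_pos
  have key : ∀ u v : ℝ, (m : ℝ) * Real.pi < u → u < (m : ℝ) * Real.pi + Real.pi / 2 →
      (m : ℝ) * Real.pi < v → v < (m : ℝ) * Real.pi + Real.pi / 2 →
      Real.sqrt (V ^ 2 - u ^ 2) = u * Real.tan u →
      Real.sqrt (V ^ 2 - v ^ 2) = v * Real.tan v → u < v → False := by
    intro u v hu1 hu2 hv1 hv2 heu hev huv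
    have hu0 : 0 < u := lt_of_le_of_lt (by positivity) hu1
    have htu : Real.tan (u - (m : ℕ) * Real.pi) = Real.tan u := Real.tan_sub_nat_mul_pi u m
    have htv : Real.tan (v - (m : ℕ) * Real.pi) = Real.tan v := Real.tan_sub_nat_mul_pi v m
    have htupos : 0 < Real.tan u := by
      rw [← htu]
      exact Real.tan_pos_of_pos_of_lt_pi_div_two (by push_cast; linarith) (by push_cast; linarith)
    have htlt : Real.tan u < Real.tan v := by
      rw [← htu, ← htv]
      exact Real.tan_lt_tan_of_nonneg_of_lt_pi_div_two (by push_cast; linarith)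
        (by push_cast; linarith) (by linarith)
    have hmul : u * Real.tan u < v * Real.tan v :=
      mul_lt_mul'' huv htlt hu0.le htupos.le
    have hsqle : Real.sqrt (V ^ 2 - v ^ 2) ≤ Real.sqrt (V ^ 2 - u ^ 2) :=
      Real.sqrt_le_sqrt (by nlinarith)
    rw [heu, hev] at hsqle
    linarith
  rcases lt_trichotomy x y with h | h | h
  · exact absurd (key x y hx1 hx2 hy1 hy2 hex hey h) (fun f => f.elim)
  · exact h
  · exact absurd (key y x hy1 hy2 hx1 hx2 hey hex h) (fun f => f.elim)

/-- Every solution lies on some branch `(mπ, mπ + π/2)`. -/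
lemma classify_solution (V τ : ℝ) (h1 : 0 < τ) (h2 : τ < V) (hcos : Real.cos τ ≠ 0)
    (heq : Real.sqrt (V ^ 2 - τ ^ 2) = τ * Real.tan τ) :
    ∃ m : ℕ, (m : ℝ) * Real.pi < τ ∧ τ < (m : ℝ) * Real.pi + Real.pi / 2 := by
  have hπ := Real.pi_pos
  set m := Nat.floor (τ / Real.pi) with hm
  have hd0 : 0 ≤ τ / Real.pi := by positivity
  have hle : (m : ℝ) ≤ τ / Real.pi := Nat.floor_le hd0
  have hltf : τ / Real.pi < (m : ℝ) + 1 := Nat.lt_floor_add_one _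
  have hmle : (m : ℝ) * Real.pi ≤ τ := by
    have := (le_div_iff₀ hπ).1 hle
    linarith
  have hmlt : τ < ((m : ℝ) + 1) * Real.pi := by
    have := (div_lt_iff₀ hπ).1 hltf
    linarith
  have hsq : 0 < Real.sqrt (V ^ 2 - τ ^ 2) := Real.sqrt_pos.2 (by nlinarith)
  have htanpos : 0 < Real.tan τ := by
    have hprod : 0 < τ * Real.tan τ := heq ▸ hsq
    by_contra hc
    push_neg at hc
    nlinarith
  set s : ℝ := τ - (m : ℝ) * Real.pi with hs
  have htans : Real.tan s = Real.tan τ := Real.tan_sub_nat_mul_pi τ m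
  have hs0 : 0 ≤ s := by simp only [hs]; linarith
  have hsπ : s < Real.pi := by simp only [hs]; linarith
  have hspos : 0 < s := by
    rcases hs0.lt_or_eq with h | h
    · exact h
    · exfalso
      have : Real.tan s = 0 := by rw [← h, Real.tan_zero]
      rw [htans] at this
      linarith
  have hshalf : s < Real.pi / 2 := by
    by_contra hcon
    push_neg at hcon
    rcases eq_or_lt_of_le hcon with h | h
    · apply hcos
      rw [Real.cos_eq_zero_iff]
      refine ⟨(m : ℤ), ?_⟩
      have hτ : τ = s + (m : ℝ) * Real.pi := by simp only [hs]; ring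
      push_cast
      rw [hτ, ← h]
      ring
    · have hneg : Real.tan (s - Real.pi) < 0 :=
        Real.tan_neg_of_neg_of_pi_div_two_lt (by linarith) (by linarith)
      rw [Real.tan_sub_pi, htans] at hneg
      linarith
  exact ⟨m, by simp only [hs] at hspos; linarith, by simp only [hs] at hshalf; linarith⟩

/-- Number of symmetric TE modes: with `V = h√(k_co² − k_cl²)` and `V/π ∉ ℤ`, the
dispersion relation `√(V² − τ²) = τ tan τ` (in the parametrization `τ = γ_co h`)
has exactly `⌊V/π⌋ + 1` solutions `τ ∈ (0, V)` with `cos τ ≠ 0`. -/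
theorem number_of_symmetric_modes (h kcl kco V : ℝ)
    (hh : 0 < h) (h1 : 0 < kcl) (h2 : kcl < kco)
    (hV : V = h * Real.sqrt (kco ^ 2 - kcl ^ 2))
    (hVint : ¬ ∃ n : ℤ, V / Real.pi = (n : ℝ)) :
    {τ : ℝ | τ ∈ Ioo 0 V ∧ Real.cos τ ≠ 0 ∧
        Real.sqrt (V ^ 2 - τ ^ 2) = τ * Real.tan τ}.ncard
      = Nat.floor (V / Real.pi) + 1 := by
  have hπ := Real.pi_pos
  have hVpos : 0 < V := by
    rw [hV]
    exact mul_pos hh (Real.sqrt_pos.2 (by nlinarith))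
  set N : ℕ := Nat.floor (V / Real.pi) with hN
  have hNle : (N : ℝ) ≤ V / Real.pi := Nat.floor_le (by positivity)
  have hNlt : (N : ℝ) < V / Real.pi := by
    rcases hNle.lt_or_eq with hlt | heq
    · exact hlt
    · exact absurd ⟨(N : ℤ), by rw [← heq]; push_cast; ring⟩ hVint
  have hNπ : (N : ℝ) * Real.pi < V := by
    have := (lt_div_iff₀ hπ).1 hNlt
    linarith
  have hex : ∀ i : Fin (N + 1), ∃ τ : ℝ,
      ((i : ℕ) : ℝ) * Real.pi < τ ∧ τ < ((i : ℕ) : ℝ) * Real.pi + Real.pi / 2 ∧ τ < V ∧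
      Real.sqrt (V ^ 2 - τ ^ 2) = τ * Real.tan τ := by
    intro i
    apply exists_branch_solution V hVpos
    have hiN : ((i : ℕ) : ℝ) ≤ (N : ℝ) := by
      exact_mod_cast Nat.lt_succ_iff.1 i.isLt
    nlinarith
  choose sol h1s h2s h3s h4s using hex
  have hmem : ∀ i, sol i ∈ {τ : ℝ | τ ∈ Ioo 0 V ∧ Real.cos τ ≠ 0 ∧
      Real.sqrt (V ^ 2 - τ ^ 2) = τ * Real.tan τ} := by
    intro i
    refine ⟨⟨lt_of_le_of_lt (by positivity) (h1s i), h3s i⟩,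
      cos_ne_zero_branch _ (h1s i).le (h2s i), h4s i⟩
  have himg : {τ : ℝ | τ ∈ Ioo 0 V ∧ Real.cos τ ≠ 0 ∧
      Real.sqrt (V ^ 2 - τ ^ 2) = τ * Real.tan τ}
      = ↑(Finset.image sol Finset.univ) := by
    ext τ
    simp only [Finset.coe_image, Finset.coe_univ, image_univ, mem_range, mem_setOf_eq]
    constructor
    · rintro ⟨⟨hτ0, hτV⟩, hcos, heq⟩
      obtain ⟨m, hm1, hm2⟩ := classify_solution V τ hτ0 hτV hcos heq
      have hmN : m ≤ N := by
        apply Nat.le_floor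
        have hmπ : (m : ℝ) * Real.pi < V := lt_trans hm1 hτV
        rw [le_div_iff₀ hπ]
        linarith
      refine ⟨⟨m, Nat.lt_succ_of_le hmN⟩, ?_⟩
      exact unique_branch V m (h1s ⟨m, Nat.lt_succ_of_le hmN⟩)
        (h2s ⟨m, Nat.lt_succ_of_le hmN⟩) hm1 hm2 (h4s ⟨m, Nat.lt_succ_of_le hmN⟩) heq
    · rintro ⟨i, rfl⟩
      exact hmem i
  rw [himg, Set.ncard_coe_finset]
  have hlt' : ∀ i j : Fin (N + 1), (i : ℕ) < (j : ℕ) → sol i < sol j := by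
    intro i j hij
    have hcast : ((i : ℕ) : ℝ) + 1 ≤ ((j : ℕ) : ℝ) := by exact_mod_cast hij
    have := h2s i
    have := h1s j
    nlinarith
  have hinj : Set.InjOn sol ↑(Finset.univ : Finset (Fin (N + 1))) := by
    intro i _ j _ hij
    rcases lt_trichotomy ((i : ℕ)) ((j : ℕ)) with hc | hc | hc
    · exact absurd hij (ne_of_lt (hlt' i j hc))
    · exact Fin.ext hc
    · exact absurd hij.symm (ne_of_lt (hlt' j i hc))
  rw [Finset.card_image_of_injOn hinj, Finset.card_univ, Fintype.card_fin]
end
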